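/- Let L₁, L₂ : ℝ → ℝ, λ, τ > 0, and K : ℝ × (0,∞) → [0,∞) with sup_t K(t,ε) → 0 as ε → 0. Suppose θ := limsup_{t-s→∞} (1/(t-s)) ∫_s^t max{-λ/(2τ), L₂(z) - L₁(z)} dz < 0 (uniformly in the starting point), and let h(t) = max{-λ/(2τ), L₂(t)-L₁(t)}. Then there exist ε > 0 and a constant C independent of t₀ such that for all t₀ ∈ ℝ and t ≥ t₀: ∫_{t₀}^t (h(s) + K(s,ε)) ds ≤ ((θ+ε)/2)(t - t₀) + C, so that exp(2∫_{t₀}^t (h+K)) ≤ C' e^{(θ+ε)(t-t₀)} decays exponentially. -/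
import Mathlib


open MeasureTheory intervalIntegral

theorem perturbed_average_negativity
    (L₁ L₂ : ℝ → ℝ) (lam τ θ : ℝ) (hlam : 0 < lam) (hτ : 0 < τ) (hθ : θ < 0)
    (K : ℝ → ℝ → ℝ) (hK0 : ∀ t ε, 0 < ε → 0 ≤ K t ε)
    -- sup_t K(t,ε) → 0 as ε → 0 :
    (hKsmall : ∀ δ : ℝ, 0 < δ → ∃ ε₀ : ℝ, 0 < ε₀ ∧ ∀ ε : ℝ, 0 < ε → ε ≤ ε₀ →
      ∀ t : ℝ, K t ε ≤ δ)
    (hloc : ∀ s t : ℝ, IntervalIntegrable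
      (fun z => max (-lam / (2 * τ)) (L₂ z - L₁ z)) volume s t)
    (hKloc : ∀ ε : ℝ, 0 < ε → ∀ s t : ℝ, IntervalIntegrable (fun z => K z ε) volume s t)
    -- uniform negativity in average of h(t) = max{-λ/(2τ), L₂(t) - L₁(t)} :
    (huniform : ∀ ε : ℝ, 0 < ε → ∃ T : ℝ, 0 < T ∧ ∀ t₀ t : ℝ, T ≤ t →
      ∫ s in t₀..(t₀ + t), max (-lam / (2 * τ)) (L₂ s - L₁ s) ≤ (θ + ε) * t) :
    ∃ ε : ℝ, 0 < ε ∧ ε < -θ ∧ ∃ C : ℝ,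
      (∀ t₀ t : ℝ, t₀ ≤ t →
        ∫ s in t₀..t, (max (-lam / (2 * τ)) (L₂ s - L₁ s) + K s ε)
          ≤ ((θ + ε) / 2) * (t - t₀) + C) ∧
      ∃ C' : ℝ, 0 < C' ∧ ∀ t₀ t : ℝ, t₀ ≤ t →
        Real.exp (2 * ∫ s in t₀..t, (max (-lam / (2 * τ)) (L₂ s - L₁ s) + K s ε))
          ≤ C' * Real.exp ((θ + ε) * (t - t₀)) := by
  set M := lam / (2 * τ) with hMdef
  have hM : 0 < M := div_pos hlam (by linarith)
  obtain ⟨ε₀, hε₀, hKb⟩ := hKsmall (-θ/4) (by linarith)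
  have hεpos : 0 < min ε₀ (-θ/4) := lt_min hε₀ (by linarith)
  set ε := min ε₀ (-θ/4) with hεdef
  have hKle : ∀ t, K t ε ≤ -θ/4 := hKb ε hεpos (min_le_left _ _)
  have hεle : ε ≤ -θ/4 := min_le_right _ _
  have ha : θ + ε < 0 := by linarith
  have hKle2 : ∀ t, K t ε ≤ -(θ + ε)/2 := fun t => (hKle t).trans (by linarith)
  obtain ⟨T, hTpos, hTb⟩ := huniform ε hεpos
  have key : ∀ t₀ t : ℝ, t₀ ≤ t →
      (∫ s in t₀..t, (max (-lam / (2 * τ)) (L₂ s - L₁ s) + K s ε))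
        ≤ ((θ + ε) / 2) * (t - t₀) + M * T := by
    intro t₀ t hle
    have hadd : (∫ s in t₀..t, (max (-lam / (2 * τ)) (L₂ s - L₁ s) + K s ε))
        = (∫ s in t₀..t, max (-lam / (2 * τ)) (L₂ s - L₁ s)) + ∫ s in t₀..t, K s ε :=
      intervalIntegral.integral_add (hloc t₀ t) (hKloc ε hεpos t₀ t)
    have hKint : (∫ s in t₀..t, K s ε) ≤ (-(θ + ε)/2) * (t - t₀) := by
      calc (∫ s in t₀..t, K s ε) ≤ ∫ _ in t₀..t, (-(θ + ε)/2) :=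
            intervalIntegral.integral_mono_on hle (hKloc ε hεpos t₀ t)
              intervalIntegrable_const (fun x _ => hKle2 x)
        _ = (-(θ + ε)/2) * (t - t₀) := by
            rw [intervalIntegral.integral_const, smul_eq_mul]; ring
    rcases le_or_gt T (t - t₀) with hTΔ | hTΔ
    · have h1 := hTb t₀ (t - t₀) hTΔ
      rw [show t₀ + (t - t₀) = t by ring] at h1
      rw [hadd]
      nlinarith [mul_nonneg hM.le hTpos.le]
    · have ht' : t ≤ t₀ + T := by linarith
      have h1 := hTb t₀ T le_rfl
      have hsplit : (∫ s in t₀..t, max (-lam / (2 * τ)) (L₂ s - L₁ s))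
          + (∫ s in t..t₀+T, max (-lam / (2 * τ)) (L₂ s - L₁ s))
          = ∫ s in t₀..t₀+T, max (-lam / (2 * τ)) (L₂ s - L₁ s) :=
        intervalIntegral.integral_add_adjacent_intervals (hloc t₀ t) (hloc t (t₀+T))
      have hlow : (-lam / (2 * τ)) * (t₀ + T - t)
          ≤ ∫ s in t..t₀+T, max (-lam / (2 * τ)) (L₂ s - L₁ s) := by
        calc (-lam / (2 * τ)) * (t₀ + T - t) = ∫ _ in t..t₀+T, (-lam / (2 * τ)) := by
              rw [intervalIntegral.integral_const, smul_eq_mul]; ring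
          _ ≤ _ := intervalIntegral.integral_mono_on ht' intervalIntegrable_const
              (hloc t (t₀+T)) (fun x _ => le_max_left _ _)
      rw [show (-lam / (2 * τ)) * (t₀ + T - t) = -(M * (t₀ + T - t)) by
        rw [hMdef]; ring] at hlow
      rw [hadd]
      nlinarith [mul_nonneg hM.le (sub_nonneg.mpr hle),
        mul_nonpos_of_nonpos_of_nonneg ha.le (by linarith : (0:ℝ) ≤ T - (t - t₀))]
  refine ⟨ε, hεpos, by linarith, M * T, key, Real.exp (2 * (M * T)), Real.exp_pos _, ?_⟩
  intro t₀ t hle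
  calc Real.exp (2 * ∫ s in t₀..t, (max (-lam / (2 * τ)) (L₂ s - L₁ s) + K s ε))
      ≤ Real.exp (2 * (((θ + ε) / 2) * (t - t₀) + M * T)) := by
        have := key t₀ t hle
        exact Real.exp_le_exp.mpr (by linarith)
    _ = Real.exp (2 * (M * T)) * Real.exp ((θ + ε) * (t - t₀)) := by
        rw [← Real.exp_add]; congr 1; ring
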